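/- The Fourier symbol of Shen's sixth-order conservative viscous scheme is F(t) = −[sin²(t)(3cos²t − 14cos t + 43)(9cos²t − 58cos t + 529)(2cos²t − 9cos t + 22)]/230400, and it satisfies F(π) = 0; i.e., Shen's scheme provides no damping of the odd-even mode. -/

import Mathlib

open Real

/-- Sixth-order central-difference cell-center gradient applied to a sequence. -/
noncomputable def grad6U (Δx : ℝ) (u : ℤ → ℂ) (m : ℤ) : ℂ :=
  (45 * (u (m+1) - u (m-1)) - 9 * (u (m+2) - u (m-2)) + (u (m+3) - u (m-3)))
    / (60 * (Δx : ℂ))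

/-- Shen's interface numerical flux `F̂_{j+1/2}`. -/
noncomputable def shenFluxU (Δx : ℝ) (u : ℤ → ℂ) (j : ℤ) : ℂ :=
  (3 * grad6U Δx u (j-2) - 25 * grad6U Δx u (j-1) + 150 * grad6U Δx u j
    + 150 * grad6U Δx u (j+1) - 25 * grad6U Δx u (j+2) + 3 * grad6U Δx u (j+3)) / 256

/-- Shen's sixth-order conservative approximation of the second derivative at cell `j`. -/
noncomputable def shenSchemeU (Δx : ℝ) (u : ℤ → ℂ) (j : ℤ) : ℂ :=
  ((75/64) * (shenFluxU Δx u j - shenFluxU Δx u (j-1))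
    + (-25/384) * (shenFluxU Δx u (j+1) - shenFluxU Δx u (j-2))
    + (3/640) * (shenFluxU Δx u (j+2) - shenFluxU Δx u (j-3))) / Δx

/-- Fourier symbol of Shen's scheme. -/
noncomputable def shenSymbol (t : ℝ) : ℝ :=
  -(Real.sin t ^ 2 * (3 * Real.cos t ^ 2 - 14 * Real.cos t + 43)
      * (9 * Real.cos t ^ 2 - 58 * Real.cos t + 529)
      * (2 * Real.cos t ^ 2 - 9 * Real.cos t + 22)) / 230400

set_option maxHeartbeats 1600000 in
/-- the Fourier symbol of Shen's sixth-order conservative viscous scheme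
is `shenSymbol`, and it vanishes at the odd-even mode `t = π`. -/
theorem shenScheme_symbol (k Δx : ℝ) (hΔx : Δx ≠ 0) (j : ℤ) :
    shenSchemeU Δx (fun m => Complex.exp (Complex.I * k * (m * Δx))) j
        = ((shenSymbol (k * Δx) : ℝ) : ℂ) / ((Δx : ℂ) ^ 2)
            * Complex.exp (Complex.I * k * (j * Δx))
    ∧ shenSymbol π = 0 := by
  constructor
  · set t := k * Δx with ht
    set z := Complex.exp (Complex.I * (t : ℂ)) with hzdef
    have hz : z ≠ 0 := Complex.exp_ne_zero _
    have hΔx' : (Δx : ℂ) ≠ 0 := Complex.ofReal_ne_zero.mpr hΔx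
    have E : ∀ (b a : ℤ) (c : ℕ), a = b + c → z ^ a = z ^ b * z ^ c := by
      intro b a c h
      rw [h, zpow_add₀ hz, zpow_natCast]
    have hexp : ∀ m : ℤ, Complex.exp (Complex.I * (k : ℂ) * ((m : ℂ) * (Δx : ℂ))) = z ^ m := by
      intro m
      rw [hzdef, ← Complex.exp_int_mul]
      push_cast [ht]
      ring_nf
    have hcosA : Complex.cos (t : ℂ) = (z + z⁻¹) / 2 := by
      rw [hzdef, ← Complex.exp_neg,
        show Complex.I * (t : ℂ) = (t : ℂ) * Complex.I by ring,
        show -((t : ℂ) * Complex.I) = (-(t : ℂ)) * Complex.I by ring,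
        Complex.exp_mul_I, Complex.exp_mul_I, Complex.cos_neg, Complex.sin_neg]
      ring
    have hcos : Complex.cos (t : ℂ) = (z ^ 2 + 1) / (2 * z) := by
      rw [hcosA]
      field_simp [hz]
    have hsinA : Complex.sin (t : ℂ) ^ 2 = -((z - z⁻¹) ^ 2) / 4 := by
      have h4' : Complex.sin (t : ℂ) = (z - z⁻¹) / (2 * Complex.I) := by
        rw [hzdef, ← Complex.exp_neg,
          show Complex.I * (t : ℂ) = (t : ℂ) * Complex.I by ring,
          show -((t : ℂ) * Complex.I) = (-(t : ℂ)) * Complex.I by ring,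
          Complex.exp_mul_I, Complex.exp_mul_I, Complex.cos_neg, Complex.sin_neg]
        field_simp [Complex.I_ne_zero]
        ring_nf
      rw [h4']
      have hI : (Complex.I : ℂ) ^ 2 = -1 := Complex.I_sq
      field_simp [Complex.I_ne_zero]
      ring_nf
      rw [Complex.I_sq]
      ring
    have hsin : Complex.sin (t : ℂ) ^ 2 = -((z ^ 2 - 1) ^ 2) / (4 * z ^ 2) := by
      rw [hsinA]
      field_simp [hz]
    set u : ℤ → ℂ := fun m => Complex.exp (Complex.I * k * (m * Δx)) with hu
    set g : ℂ := (45 * (z ^ 4 - z ^ 2) - 9 * (z ^ 5 - z) + (z ^ 6 - 1))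
        / (60 * (Δx : ℂ)) with hg
    have hgrad : ∀ m : ℤ, grad6U Δx u m = g * z ^ (m - 3) := by
      intro m
      simp only [grad6U, hu, hexp, hg]
      rw [E (m-3) (m+1) 4 (by omega), E (m-3) (m-1) 2 (by omega),
        E (m-3) (m+2) 5 (by omega), E (m-3) (m-2) 1 (by omega),
        E (m-3) (m+3) 6 (by omega)]
      field_simp
    set f : ℂ := (3 - 25 * z + 150 * z ^ 2 + 150 * z ^ 3 - 25 * z ^ 4 + 3 * z ^ 5)
        / 256 * g with hf
    have hflux : ∀ i : ℤ, shenFluxU Δx u i = f * z ^ (i - 5) := by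
      intro i
      simp only [shenFluxU, hgrad, hf]
      rw [E (i-8) (i-2-3) 3 (by omega), E (i-8) (i-1-3) 4 (by omega),
        E (i-8) (i-3) 5 (by omega), E (i-8) (i+1-3) 6 (by omega),
        E (i-8) (i+2-3) 7 (by omega), E (i-8) (i+3-3) 8 (by omega),
        E (i-8) (i-5) 3 (by omega)]
      field_simp
    show shenSchemeU Δx u j = _ * Complex.exp (Complex.I * k * ((j : ℂ) * Δx))
    rw [show Complex.exp (Complex.I * k * ((j : ℂ) * Δx))
        = Complex.exp (Complex.I * (k : ℂ) * ((j : ℂ) * (Δx : ℂ))) by norm_cast,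
      hexp j]
    clear_value t z u g f
    have hzp : ∀ n : ℕ, z ^ n ≠ 0 := fun n => pow_ne_zero n hz
    have hxp : ∀ n : ℕ, ((Δx : ℂ)) ^ n ≠ 0 := fun n => pow_ne_zero n hΔx'
    have h4 : (4 : ℂ) * z ^ 2 ≠ 0 := mul_ne_zero (by norm_num) (pow_ne_zero 2 hz)
    have hA : 3 * Complex.cos (t:ℂ) ^ 2 - 14 * Complex.cos (t:ℂ) + 43
        = (3*(z^2+1)^2 - 14*(z^2+1)*(2*z) + 43*(4*z^2))/(4*z^2) := by
      rw [hcos]; field_simp; ring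
    have hB : 9 * Complex.cos (t:ℂ) ^ 2 - 58 * Complex.cos (t:ℂ) + 529
        = (9*(z^2+1)^2 - 58*(z^2+1)*(2*z) + 529*(4*z^2))/(4*z^2) := by
      rw [hcos]; field_simp; ring
    have hC : 2 * Complex.cos (t:ℂ) ^ 2 - 9 * Complex.cos (t:ℂ) + 22
        = (2*(z^2+1)^2 - 9*(z^2+1)*(2*z) + 22*(4*z^2))/(4*z^2) := by
      rw [hcos]; field_simp; ring
    have hsym : ((shenSymbol t : ℝ) : ℂ)
        = ((z ^ 2 - 1) ^ 2
            * (3 * (z ^ 2 + 1) ^ 2 - 14 * (z ^ 2 + 1) * (2 * z) + 43 * (4 * z ^ 2))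
            * (9 * (z ^ 2 + 1) ^ 2 - 58 * (z ^ 2 + 1) * (2 * z) + 529 * (4 * z ^ 2))
            * (2 * (z ^ 2 + 1) ^ 2 - 9 * (z ^ 2 + 1) * (2 * z) + 22 * (4 * z ^ 2)))
          / (58982400 * z ^ 8) := by
      simp only [shenSymbol]
      push_cast
      rw [hsin, hA, hB, hC, div_mul_div_comm, div_mul_div_comm, div_mul_div_comm,
        ← neg_div, div_div]
      rw [div_eq_div_iff
        (by exact mul_ne_zero (mul_ne_zero (mul_ne_zero (mul_ne_zero h4 h4) h4) h4) (by norm_num))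
        (mul_ne_zero (by norm_num) (pow_ne_zero 8 hz))]
      ring
    simp only [shenSchemeU, hflux]
    rw [hsym]
    simp only [hf, hg]
    rw [E (j-8) (j-5) 3 (by omega), E (j-8) (j-1-5) 2 (by omega),
      E (j-8) (j+1-5) 4 (by omega), E (j-8) (j-2-5) 1 (by omega),
      E (j-8) (j+2-5) 5 (by omega), E (j-8) (j-3-5) 0 (by omega),
      E (j-8) j 8 (by omega)]
    generalize z ^ (j - 8) = Z
    simp only [div_mul_div_comm, div_mul_eq_mul_div, ← mul_div_assoc, ← sub_div,
      ← add_div, div_div]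
    have d1 : ((64:ℂ) * (256 * (60 * (Δx:ℂ)))) ≠ 0 := by simp [hΔx']
    have d2 : ((384:ℂ) * (256 * (60 * (Δx:ℂ)))) ≠ 0 := by simp [hΔx']
    have d3 : ((640:ℂ) * (256 * (60 * (Δx:ℂ)))) ≠ 0 := by simp [hΔx']
    have d12 : ((64:ℂ) * (256 * (60 * (Δx:ℂ))) * ((384:ℂ) * (256 * (60 * (Δx:ℂ))))) ≠ 0 :=
      mul_ne_zero d1 d2
    rw [div_add_div _ _ d1 d2, div_add_div _ _ d12 d3, div_div]
    rw [div_eq_div_iff (mul_ne_zero (mul_ne_zero d12 d3) hΔx')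
      (mul_ne_zero (mul_ne_zero (by norm_num) (hzp 8)) (hxp 2))]
    ring
  · simp [shenSymbol, Real.sin_pi]
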